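/- Let n ≥ 1 be an integer, let f : ℝⁿ → ℂ be smooth on ℝⁿ \ {0}, and let x ∈ ℝⁿ with x ≠ 0. Then ∑_{j=1}^n L_j(L_j f)(x) = Δf(x) − Δ_r f(x), where Δ is the Euclidean Laplacian; i.e. the sum of squares of the spherical-type derivatives L_j equals the spherical part Δ − Δ_r of the Laplacian. -/

import Mathlib

open MeasureTheory
open scoped RealInnerProductSpace

set_option maxHeartbeats 1000000
noncomputable section

/-- Radial derivative `∂_r f (x) = (x/|x|)·∇f(x)`. -/
def radialDeriv (n : ℕ) (f : EuclideanSpace ℝ (Fin n) → ℂ)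
    (x : EuclideanSpace ℝ (Fin n)) : ℂ :=
  fderiv ℝ f x (‖x‖⁻¹ • x)

/-- Radial Laplacian `Δ_r f = ∂_r(∂_r f) + ((n-1)/|x|) ∂_r f`. -/
def radialLaplacian (n : ℕ) (f : EuclideanSpace ℝ (Fin n) → ℂ)
    (x : EuclideanSpace ℝ (Fin n)) : ℂ :=
  radialDeriv n (radialDeriv n f) x + (((n : ℝ) - 1) / ‖x‖) • radialDeriv n f x

/-- Euclidean Laplacian `Δ f = ∑ⱼ ∂ⱼ∂ⱼ f`. -/
def euclideanLaplacian (n : ℕ) (f : EuclideanSpace ℝ (Fin n) → ℂ)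
    (x : EuclideanSpace ℝ (Fin n)) : ℂ :=
  ∑ j : Fin n,
    fderiv ℝ (fun y => fderiv ℝ f y (EuclideanSpace.single j 1)) x (EuclideanSpace.single j 1)

/-- Spherical part `Δ_s f = Δ f − Δ_r f`. -/
def sphericalLaplacian (n : ℕ) (f : EuclideanSpace ℝ (Fin n) → ℂ)
    (x : EuclideanSpace ℝ (Fin n)) : ℂ :=
  euclideanLaplacian n f x - radialLaplacian n f x

/-- Spherical-type derivative `L_j f = ∂_j f − (x_j/|x|) ∂_r f`. -/
def sphericalDeriv (n : ℕ) (j : Fin n) (f : EuclideanSpace ℝ (Fin n) → ℂ)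
    (x : EuclideanSpace ℝ (Fin n)) : ℂ :=
  fderiv ℝ f x (EuclideanSpace.single j 1) - (x j / ‖x‖) • radialDeriv n f x

/-- The sum of squares of the spherical-type derivatives `L_j` equals the spherical part
`Δ − Δ_r` of the Laplacian, pointwise away from the origin. -/
theorem sum_sq_sphericalDeriv_eq (n : ℕ) (hn : 1 ≤ n) (f : EuclideanSpace ℝ (Fin n) → ℂ)
    (hf : ContDiffOn ℝ (⊤ : ℕ∞) f ({0}ᶜ : Set (EuclideanSpace ℝ (Fin n))))
    (x : EuclideanSpace ℝ (Fin n)) (hx : x ≠ 0) :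
    ∑ j : Fin n, sphericalDeriv n j (sphericalDeriv n j f) x =
      euclideanLaplacian n f x - radialLaplacian n f x := by
  classical
  have hR : ‖x‖ ≠ 0 := norm_ne_zero_iff.mpr hx
  have hRC : ((‖x‖ : ℂ)) ≠ 0 := by exact_mod_cast hR
  have hmem : ({0}ᶜ : Set (EuclideanSpace ℝ (Fin n))) ∈ nhds x :=
    isOpen_compl_singleton.mem_nhds hx
  have hfx : ContDiffAt ℝ (⊤ : ℕ∞) f x := hf.contDiffAt hmem
  have hD : ContDiffAt ℝ (⊤ : ℕ∞) (fderiv ℝ f) x := hfx.fderiv_right (by simp)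
  set T := fderiv ℝ f x with hT
  set B := fderiv ℝ (fderiv ℝ f) x with hBdef
  have hB : HasFDerivAt (fderiv ℝ f) B x := (hD.differentiableAt (by simp)).hasFDerivAt
  have hsymm : ∀ v w, B v w = B w v := by
    intro v w
    refine second_derivative_symmetric_of_eventually (f := f) ?_ hB v w
    filter_upwards [hmem] with y hy
    exact ((hf.contDiffAt (isOpen_compl_singleton.mem_nhds hy)).differentiableAt
      (by simp)).hasFDerivAt
  -- derivative of the norm
  have hnormsq : HasFDerivAt (fun y : EuclideanSpace ℝ (Fin n) => ‖y‖ ^ 2)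
      (2 • (innerSL ℝ x)) x := (hasStrictFDerivAt_norm_sq x).hasFDerivAt
  have hsqrt : HasDerivAt Real.sqrt (1 / (2 * Real.sqrt (‖x‖ ^ 2))) (‖x‖ ^ 2) :=
    Real.hasDerivAt_sqrt (by positivity)
  have hnorm : HasFDerivAt (fun y : EuclideanSpace ℝ (Fin n) => ‖y‖)
      (‖x‖⁻¹ • innerSL ℝ x) x := by
    have h := hsqrt.comp_hasFDerivAt x hnormsq
    have heq : (Real.sqrt ∘ fun y : EuclideanSpace ℝ (Fin n) => ‖y‖ ^ 2)
        = fun y : EuclideanSpace ℝ (Fin n) => ‖y‖ := by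
      funext y; simp [Function.comp, Real.sqrt_sq (norm_nonneg y)]
    rw [heq] at h
    refine h.congr_fderiv ?_
    ext w
    simp [Real.sqrt_sq (norm_nonneg x), smul_smul]
    field_simp
  -- derivative of the inverse norm
  have hinv : HasFDerivAt (fun y : EuclideanSpace ℝ (Fin n) => ‖y‖⁻¹)
      ((-(‖x‖ ^ 2)⁻¹) • (‖x‖⁻¹ • innerSL ℝ x)) x :=
    (hasDerivAt_inv hR).comp_hasFDerivAt x hnorm
  -- derivative of y ↦ (fderiv f y) y
  have hF : HasFDerivAt (fun y => fderiv ℝ f y y)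
      (T.comp (ContinuousLinearMap.id ℝ (EuclideanSpace ℝ (Fin n))) + B.flip x) x :=
    hB.clm_apply (hasFDerivAt_id x)
  -- the radial derivative rewritten
  have hr_eq : radialDeriv n f = fun y => ‖y‖⁻¹ • fderiv ℝ f y y := by
    funext y
    simp [radialDeriv, _root_.map_smul]
  have hr : HasFDerivAt (radialDeriv n f)
      ((‖x‖⁻¹ : ℝ) • (T.comp (ContinuousLinearMap.id ℝ (EuclideanSpace ℝ (Fin n))) + B.flip x)
        + ((-(‖x‖ ^ 2)⁻¹) • (‖x‖⁻¹ • innerSL ℝ x)).smulRight (T x)) x := by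
    rw [hr_eq]
    exact hinv.smul hF
  have hrx : radialDeriv n f x = ‖x‖⁻¹ • (T x) := by
    simp [radialDeriv, _root_.map_smul]
    exact Or.inl rfl
  have hcoord : ∀ j : Fin n, HasFDerivAt (fun y : EuclideanSpace ℝ (Fin n) => y j)
      (EuclideanSpace.proj j : EuclideanSpace ℝ (Fin n) →L[ℝ] ℝ) x := fun j =>
    (EuclideanSpace.proj j : EuclideanSpace ℝ (Fin n) →L[ℝ] ℝ).hasFDerivAt
  have hg_eq : ∀ j : Fin n, sphericalDeriv n j f
      = fun y => fderiv ℝ f y (EuclideanSpace.single j 1)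
          - (y j * ‖y‖⁻¹) • radialDeriv n f y := by
    intro j; funext y; rw [sphericalDeriv, div_eq_mul_inv]
  have hsph : ∀ j : Fin n, HasFDerivAt (sphericalDeriv n j f)
      ((T.comp (0 : EuclideanSpace ℝ (Fin n) →L[ℝ] EuclideanSpace ℝ (Fin n))
          + B.flip (EuclideanSpace.single j 1))
        - ((x j * ‖x‖⁻¹) • ((‖x‖⁻¹ : ℝ) • (T.comp
              (ContinuousLinearMap.id ℝ (EuclideanSpace ℝ (Fin n))) + B.flip x)
            + ((-(‖x‖ ^ 2)⁻¹) • (‖x‖⁻¹ • innerSL ℝ x)).smulRight (T x))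
          + (x j • ((-(‖x‖ ^ 2)⁻¹) • (‖x‖⁻¹ • innerSL ℝ x))
              + ‖x‖⁻¹ • (EuclideanSpace.proj j : EuclideanSpace ℝ (Fin n) →L[ℝ] ℝ)).smulRight
              (radialDeriv n f x))) x := by
    intro j
    rw [hg_eq j]
    exact (hB.clm_apply (hasFDerivAt_const (EuclideanSpace.single j 1) x)).sub
      (((hcoord j).mul hinv).smul hr)
  -- the Laplacian in terms of B
  have hlap : euclideanLaplacian n f x
      = ∑ j : Fin n, B (EuclideanSpace.single j 1) (EuclideanSpace.single j 1) := by
    unfold euclideanLaplacian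
    refine Finset.sum_congr rfl fun j _ => ?_
    rw [(hB.clm_apply (hasFDerivAt_const (EuclideanSpace.single j 1) x)).fderiv]
    simp
  -- basic sums
  have hsum_x : ∑ j, x j • EuclideanSpace.single j (1:ℝ) = x := by
    ext i
    rw [WithLp.ofLp_sum, Finset.sum_apply]
    simp [EuclideanSpace.single_apply]
  have hTa : ∑ j, ((x j : ℂ)) * T (EuclideanSpace.single j 1) = T x := by
    conv_rhs => rw [← hsum_x]
    rw [map_sum]
    simp [Complex.real_smul]
  have hTb : ∑ j, ((x j : ℂ)) * B x (EuclideanSpace.single j 1) = B x x := by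
    conv_rhs => rw [show B x x = B x (∑ j, x j • EuclideanSpace.single j (1:ℝ)) by rw [hsum_x]]
    rw [map_sum]
    simp [Complex.real_smul]
  have hsum_sq : ∑ j, ((x j : ℂ))^2 = ((‖x‖ : ℂ))^2 := by
    have : ∑ j, (x j)^2 = ‖x‖^2 := by
      rw [EuclideanSpace.norm_eq, Real.sq_sqrt (by positivity)]
      simp [Real.norm_eq_abs, sq_abs]
    exact_mod_cast congrArg Complex.ofReal this
  -- the per-j value
  have key : ∀ j : Fin n, sphericalDeriv n j (sphericalDeriv n j f) x
      = B (EuclideanSpace.single j 1) (EuclideanSpace.single j 1)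
        - ((x j : ℂ) / (‖x‖ : ℂ)^2) * T (EuclideanSpace.single j 1)
        - 2 * ((x j : ℂ) / (‖x‖ : ℂ)^2) * B x (EuclideanSpace.single j 1)
        + 2 * ((x j : ℂ)^2 / (‖x‖ : ℂ)^4) * T x
        - (1 / (‖x‖ : ℂ)^2) * T x
        + ((x j : ℂ)^2 / (‖x‖ : ℂ)^4) * B x x := by
    intro j
    have h1 : sphericalDeriv n j (sphericalDeriv n j f) x
        = fderiv ℝ (sphericalDeriv n j f) x (EuclideanSpace.single j 1)
          - (x j / ‖x‖) • fderiv ℝ (sphericalDeriv n j f) x (‖x‖⁻¹ • x) := rfl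
    rw [h1, (hsph j).fderiv]
    simp only [ContinuousLinearMap.sub_apply, ContinuousLinearMap.add_apply,
      ContinuousLinearMap.comp_apply, ContinuousLinearMap.flip_apply,
      ContinuousLinearMap.coe_smul', Pi.smul_apply, ContinuousLinearMap.smulRight_apply,
      ContinuousLinearMap.zero_apply, ContinuousLinearMap.id_apply, innerSL_apply_apply,
      _root_.map_smul, map_zero, hrx]
    have hinner_single : @inner ℝ _ _ x (EuclideanSpace.single j (1:ℝ)) = x j := by
      rw [EuclideanSpace.inner_single_right]; simp
    have hinner_self : @inner ℝ _ _ x x = ‖x‖^2 := real_inner_self_eq_norm_sq x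
    have hproj : (EuclideanSpace.proj j : EuclideanSpace ℝ (Fin n) →L[ℝ] ℝ)
        (EuclideanSpace.single j (1:ℝ)) = 1 := by
      simp [EuclideanSpace.single_apply]
    have hprojx : (EuclideanSpace.proj j : EuclideanSpace ℝ (Fin n) →L[ℝ] ℝ) x = x j := rfl
    rw [hsymm (EuclideanSpace.single j 1) x]
    simp only [hinner_single, hinner_self, hproj, hprojx, smul_eq_mul, Complex.real_smul]
    push_cast
    linear_combination (-2 * ((x j : ℂ))^2 * (((‖x‖ : ℂ))⁻¹)^4 * T x
      * ((‖x‖ : ℂ) * ((‖x‖ : ℂ))⁻¹ + 1)) * (mul_inv_cancel₀ hRC)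
  rw [Finset.sum_congr rfl (fun j _ => key j)]
  have hradlap : radialLaplacian n f x
      = (1 / (‖x‖ : ℂ)^2) * B x x + (((n : ℂ) - 1) / (‖x‖ : ℂ)^2) * T x := by
    have h2 : radialDeriv n (radialDeriv n f) x
        = fderiv ℝ (radialDeriv n f) x (‖x‖⁻¹ • x) := rfl
    rw [radialLaplacian, h2, hr.fderiv, hrx]
    simp only [ContinuousLinearMap.add_apply, ContinuousLinearMap.comp_apply,
      ContinuousLinearMap.flip_apply, ContinuousLinearMap.coe_smul', Pi.smul_apply,
      ContinuousLinearMap.smulRight_apply, ContinuousLinearMap.id_apply, innerSL_apply_apply,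
      _root_.map_smul, smul_eq_mul, Complex.real_smul]
    rw [real_inner_self_eq_norm_sq x]
    push_cast
    linear_combination (-(((‖x‖ : ℂ))⁻¹)^2 * T x
      * ((‖x‖ : ℂ) * ((‖x‖ : ℂ))⁻¹ + 1)) * (mul_inv_cancel₀ hRC)
  rw [hradlap, hlap]
  simp only [Finset.sum_add_distrib, Finset.sum_sub_distrib]
  -- now reduce the sums
  have e1 : ∑ j, ((x j : ℂ) / (‖x‖ : ℂ)^2) * T (EuclideanSpace.single j 1)
      = (1 / (‖x‖ : ℂ)^2) * T x := by
    rw [← hTa, Finset.mul_sum]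
    refine Finset.sum_congr rfl fun j _ => ?_
    ring
  have e2 : ∑ j, 2 * ((x j : ℂ) / (‖x‖ : ℂ)^2) * B x (EuclideanSpace.single j 1)
      = 2 * (1 / (‖x‖ : ℂ)^2) * B x x := by
    rw [← hTb, Finset.mul_sum]
    refine Finset.sum_congr rfl fun j _ => ?_
    ring
  have e3 : ∑ j, 2 * ((x j : ℂ)^2 / (‖x‖ : ℂ)^4) * T x
      = 2 * (1 / (‖x‖ : ℂ)^2) * T x := by
    rw [Finset.sum_congr rfl (fun j _ => show 2 * ((x j : ℂ)^2 / (‖x‖ : ℂ)^4) * T x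
        = ((x j : ℂ)^2) * (2 / (‖x‖ : ℂ)^4 * T x) from by ring)]
    rw [← Finset.sum_mul, hsum_sq]
    field_simp [hRC]
  have e4 : ∑ j, ((x j : ℂ)^2 / (‖x‖ : ℂ)^4) * B x x
      = (1 / (‖x‖ : ℂ)^2) * B x x := by
    rw [Finset.sum_congr rfl (fun j _ => show ((x j : ℂ)^2 / (‖x‖ : ℂ)^4) * B x x
        = ((x j : ℂ)^2) * (1 / (‖x‖ : ℂ)^4 * B x x) from by ring)]
    rw [← Finset.sum_mul, hsum_sq]
    field_simp [hRC]
  have e5 : ∑ _j : Fin n, (1 / (‖x‖ : ℂ)^2) * T x = (n : ℂ) * ((1 / (‖x‖ : ℂ)^2) * T x) := by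
    rw [Finset.sum_const, Finset.card_univ, Fintype.card_fin, nsmul_eq_mul]
  rw [e1, e2, e3, e4, e5]
  ring
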